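/- For all positive integers m and n, the infinite alternating series sum over i >= 1 of (-1)^i / (L_{2m(i-1)+n} * L_{2m(i+1)+n}) converges to (1/(5 * F_n * F_{4m})) * (L_{2m}/L_{2m+n} - 2/L_n). -/

import Mathlib

/-!
Write `a i = L (2mi + n)` and `c = L (2m)`. Binet's formula gives `a (i + 2) + a i = c * a (i + 1)`,
so with `u i = (-1) ^ (i + 1) / (a i * a (i + 1))` the `i`-th term is `(u i - u (i + 1)) / c` and the
series telescopes to `u 0 / c = -1 / (L (2m) * L n * L (2m + n))`; it converges absolutely since
`a (i + 1) ≥ 2 * a i`. The identities `L j * L n + 5 * F j * F n = 2 * L (j + n)` and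
`F (2m) * L (2m) = F (4m)` turn this value into the stated closed form.
-/

def lucas : ℕ → ℕ
  | 0 => 2
  | 1 => 1
  | n + 2 => lucas (n + 1) + lucas n

open scoped goldenRatio

theorem lucas_add_two (k : ℕ) : lucas (k + 2) = lucas (k + 1) + lucas k := rfl

theorem lucas_pos : ∀ k, 0 < lucas k
  | 0 => by decide
  | 1 => by decide
  | k + 2 => by rw [lucas_add_two]; exact Nat.add_pos_right _ (lucas_pos k)

theorem monotone_lucas_succ : Monotone fun k => lucas (k + 1) :=
  monotone_nat_of_le_succ fun k => by rw [lucas_add_two]; exact Nat.le_add_right _ _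

theorem two_mul_lucas_le_lucas_add {k j : ℕ} (hk : 1 ≤ k) (hj : 2 ≤ j) :
    2 * lucas k ≤ lucas (k + j) := by
  obtain ⟨k, rfl⟩ := Nat.exists_eq_add_of_le' hk
  obtain ⟨j, rfl⟩ := Nat.exists_eq_add_of_le' hj
  calc 2 * lucas (k + 1) = lucas (k + 1) + lucas (k + 1) := two_mul _
    _ ≤ lucas (k + 2) + lucas (k + 1) :=
        Nat.add_le_add_right (monotone_lucas_succ (Nat.le_succ k)) _
    _ = lucas (k + 2 + 1) := (lucas_add_two (k + 1)).symm
    _ ≤ lucas (k + j + 2 + 1) := monotone_lucas_succ (by omega)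
    _ = lucas (k + 1 + (j + 2)) := by congr 1; omega

theorem coe_lucas_eq : ∀ k, (lucas k : ℝ) = φ ^ k + ψ ^ k
  | 0 => by norm_num [lucas]
  | 1 => by simp [lucas, Real.goldenRatio_add_goldenConj]
  | k + 2 => by
      rw [lucas_add_two, Nat.cast_add, coe_lucas_eq k, coe_lucas_eq (k + 1)]
      linear_combination -(φ ^ k * Real.goldenRatio_sq) - ψ ^ k * Real.goldenConj_sq

theorem lucas_add_four_mul_add_lucas (k j : ℕ) :
    lucas (k + 4 * j) + lucas k = lucas (2 * j) * lucas (k + 2 * j) := by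
  -- `ring` unfolds `φ`, `ψ` to `(1 ± √5) / 2`, so `(φ * ψ) ^ (2 * j)` would not match the powers below.
  have h : φ ^ (2 * j) * ψ ^ (2 * j) = 1 := by
    rw [← mul_pow, Real.goldenRatio_mul_goldenConj, pow_mul]; norm_num
  have : (lucas (k + 4 * j) + lucas k : ℝ) = lucas (2 * j) * lucas (k + 2 * j) := by
    rw [coe_lucas_eq, coe_lucas_eq, coe_lucas_eq, coe_lucas_eq]
    linear_combination (-(φ ^ k) - ψ ^ k) * h
  exact_mod_cast this

theorem lucas_mul_lucas_add_five_mul_fib_mul_fib (j n : ℕ) :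
    lucas j * lucas n + 5 * (Nat.fib j * Nat.fib n) = 2 * lucas (j + n) := by
  have h5 : √5 ^ 2 = 5 := Real.sq_sqrt (by norm_num)
  have : (lucas j * lucas n + 5 * (Nat.fib j * Nat.fib n) : ℝ) = 2 * lucas (j + n) := by
    rw [coe_lucas_eq, coe_lucas_eq, coe_lucas_eq, Real.coe_fib_eq, Real.coe_fib_eq]
    field_simp
    linear_combination -(φ ^ j - ψ ^ j) * (φ ^ n - ψ ^ n) * h5
  exact_mod_cast this

theorem fib_mul_lucas (k : ℕ) : Nat.fib k * lucas k = Nat.fib (2 * k) := by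
  have : (Nat.fib k * lucas k : ℝ) = Nat.fib (2 * k) := by
    rw [coe_lucas_eq, Real.coe_fib_eq, Real.coe_fib_eq]
    ring
  exact_mod_cast this

theorem lucas_div_lucas_add_sub_two_div_lucas (j n : ℕ) :
    (lucas j / lucas (j + n) - 2 / lucas n : ℝ)
      = -(5 * Nat.fib j * Nat.fib n) / (lucas n * lucas (j + n)) := by
  have hident : (lucas j * lucas n + 5 * (Nat.fib j * Nat.fib n) : ℝ) = 2 * lucas (j + n) := by
    exact_mod_cast lucas_mul_lucas_add_five_mul_fib_mul_fib j n
  have := lucas_pos n; have := lucas_pos (j + n)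
  field_simp
  linear_combination hident

theorem Summable.hasSum_sub_succ {G : Type*} [AddCommGroup G] [TopologicalSpace G]
    [IsTopologicalAddGroup G] {u : ℕ → G} (hu : Summable u) :
    HasSum (fun i => u i - u (i + 1)) (u 0) := by
  have h := hu.hasSum
  simpa using h.sub ((hasSum_nat_add_iff' 1).mpr h)

theorem hasSum_neg_one_pow_div_mul_of_add_eq_mul {a : ℕ → ℝ} {c : ℝ}
    (hpos : ∀ i, 0 < a i) (hgrow : ∀ i, 2 * a i ≤ a (i + 1))
    (hrec : ∀ i, a (i + 2) + a i = c * a (i + 1)) :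
    HasSum (fun i => (-1) ^ (i + 1) / (a i * a (i + 2))) (-1 / (c * a 0 * a 1)) := by
  set u : ℕ → ℝ := fun i => (-1) ^ (i + 1) / (a i * a (i + 1))
  have hc : 0 < c :=
    pos_of_mul_pos_left (hrec 0 ▸ add_pos (hpos 2) (hpos 0)) (hpos 1).le
  have hnorm : ∀ i, ‖u i‖ = 1 / (a i * a (i + 1)) := fun i => by
    simp only [u, norm_div, norm_pow, norm_neg, norm_one, one_pow,
      Real.norm_of_nonneg (mul_pos (hpos i) (hpos (i + 1))).le]
  have hu : Summable u := by
    refine summable_of_ratio_norm_eventually_le (r := 1 / 2) (by norm_num)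
      (Filter.Eventually.of_forall fun i => ?_)
    have := hpos i; have := hpos (i + 1); have := hgrow i; have := hgrow (i + 1)
    calc ‖u (i + 1)‖ ≤ 1 / (2 * (a i * a (i + 1))) := by
          rw [hnorm]; exact one_div_le_one_div_of_le (by positivity) (by nlinarith)
      _ = 1 / 2 * ‖u i‖ := by rw [hnorm]; ring
  have htel : ∀ i, (-1) ^ (i + 1) / (a i * a (i + 2)) = (u i - u (i + 1)) / c := fun i => by
    have := hpos i; have := hpos (i + 1); have := hpos (i + 2)
    simp only [u, pow_succ]
    field_simp
    linear_combination hrec i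
  have hu0 : u 0 / c = -1 / (c * a 0 * a 1) := by
    simp only [u, zero_add, pow_one]
    field_simp
  simpa only [htel, hu0] using hu.hasSum_sub_succ.div_const c

theorem stmt_15 (m n : ℕ) (hm : 0 < m) (hn : 0 < n) :
    HasSum (fun i : ℕ =>
      (-1 : ℝ) ^ (i + 1) /
        ((lucas (2 * m * i + n) : ℝ) * (lucas (2 * m * (i + 2) + n) : ℝ)))
      ((1 / (5 * (Nat.fib n : ℝ) * (Nat.fib (4 * m) : ℝ))) *
        ((lucas (2 * m) : ℝ) / (lucas (2 * m + n) : ℝ) - 2 / (lucas n : ℝ))) := by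
  have hrec : ∀ i, (lucas (2 * m * (i + 2) + n) : ℝ) + lucas (2 * m * i + n)
      = lucas (2 * m) * lucas (2 * m * (i + 1) + n) := fun i => by
    have h := lucas_add_four_mul_add_lucas (2 * m * i + n) m
    rw [show 2 * m * i + n + 4 * m = 2 * m * (i + 2) + n by ring,
      show 2 * m * i + n + 2 * m = 2 * m * (i + 1) + n by ring] at h
    exact_mod_cast h
  have hgrow : ∀ i, 2 * (lucas (2 * m * i + n) : ℝ) ≤ lucas (2 * m * (i + 1) + n) := fun i => by
    have h := two_mul_lucas_le_lucas_add (k := 2 * m * i + n) (j := 2 * m) (by omega) (by omega)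
    rw [show 2 * m * i + n + 2 * m = 2 * m * (i + 1) + n by ring] at h
    exact_mod_cast h
  convert hasSum_neg_one_pow_div_mul_of_add_eq_mul (fun i => by exact_mod_cast lucas_pos _)
    hgrow hrec using 1
  have hF : (Nat.fib n : ℝ) ≠ 0 := by exact_mod_cast (Nat.fib_pos.mpr hn).ne'
  have hF' : (Nat.fib (2 * m) : ℝ) ≠ 0 := by exact_mod_cast (Nat.fib_pos.mpr (by omega)).ne'
  have hfib : (Nat.fib (4 * m) : ℝ) = Nat.fib (2 * m) * lucas (2 * m) := by
    rw [show 4 * m = 2 * (2 * m) by ring]; exact_mod_cast (fib_mul_lucas _).symm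
  have := lucas_pos n; have := lucas_pos (2 * m); have := lucas_pos (2 * m + n)
  rw [lucas_div_lucas_add_sub_two_div_lucas, hfib]
  simp only [mul_zero, zero_add, mul_one]
  field_simp
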